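/- arXiv:1609.03690 — 4 statements merged into one kernel-verified Lean document; each statement's English description precedes it below -/
import Mathlib

section
/- Let G be a finite group, H a subgroup of G of index 2, and x an element of G not in H. Let φ : H → (Fin n → ZMod 2) be a Gray map. Define φ̂ : G → (Fin (2n) → ZMod 2) by φ̂(g) = (φ(g) | φ(g)) if g ∈ H, and φ̂(g) = (φ(x⁻¹g) | φ(x⁻¹g) + 𝟏) if g ∉ H, where 𝟏 is the all-ones vector of length n and ( · | · ) denotes concatenation. Then for all a, b ∈ G, w_H(φ̂(a·b)) ≤ w_H(φ̂(a)) + w_H(φ̂(b)). -/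
/-!
For `g ∉ H` the two halves of `φ̂ g` are complementary, so `w_H(φ̂ g) = n`; for `g ∈ H`,
`w_H(φ̂ g) = 2 w_H(φ g) ≤ 2n`. Since `H` has index 2, `a * b ∉ H` exactly when one of `a, b`
lies outside `H`, and then the bound is immediate; if both lie outside, `a * b ∈ H` and
`2 w_H(φ (a * b)) ≤ 2n`; if both lie in `H`, the triangle inequality of `d_φ` through `b`
gives `w_H(φ (a * b)) ≤ w_H(φ a) + w_H(φ b)`.
-/

/-- A map `φ : G → (Fin n → ZMod 2)` is a Gray map if `d_φ(a,b) = w_H(φ(a b⁻¹))` is a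
metric on `G` and moreover `d_φ(a,b) = d_H(φ a, φ b)` for all `a b`. -/
def IsGrayMap {G : Type*} [Group G] {n : ℕ} (φ : G → (Fin n → ZMod 2)) : Prop :=
  (∀ a b : G, hammingNorm (φ (a * b⁻¹)) = 0 ↔ a = b) ∧
  (∀ a b : G, hammingNorm (φ (a * b⁻¹)) = hammingNorm (φ (b * a⁻¹))) ∧
  (∀ a b c : G, hammingNorm (φ (a * c⁻¹)) ≤
      hammingNorm (φ (a * b⁻¹)) + hammingNorm (φ (b * c⁻¹))) ∧
  (∀ a b : G, hammingNorm (φ (a * b⁻¹)) = hammingDist (φ a) (φ b))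

theorem hammingNorm_comp_equiv {ι κ β : Type*} [Fintype ι] [Fintype κ] [Zero β]
    [DecidableEq β] (x : ι → β) (e : κ ≃ ι) : hammingNorm (x ∘ e) = hammingNorm x := by
  simp only [hammingNorm, Finset.card_filter]
  exact e.sum_comp fun i => if x i ≠ 0 then 1 else 0

theorem hammingNorm_finAppend {β : Type*} [Zero β] [DecidableEq β] {m n : ℕ}
    (u : Fin m → β) (w : Fin n → β) :
    hammingNorm (Fin.append u w) = hammingNorm u + hammingNorm w := by
  simp only [hammingNorm, Finset.card_filter, Fin.sum_univ_add, Fin.append_left,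
    Fin.append_right]

theorem hammingNorm_finAppend_cast {β : Type*} [Zero β] [DecidableEq β] {k m n : ℕ}
    (h : k = m + n) (u : Fin m → β) (w : Fin n → β) :
    hammingNorm (fun i : Fin k => Fin.append u w (Fin.cast h i)) =
      hammingNorm u + hammingNorm w :=
  (hammingNorm_comp_equiv (Fin.append u w) (finCongr h)).trans (hammingNorm_finAppend u w)

theorem hammingNorm_add_hammingNorm_add_one {ι : Type*} [Fintype ι] (v : ι → ZMod 2) :
    hammingNorm v + hammingNorm (v + 1) = Fintype.card ι := by
  have flip : ∀ a : ZMod 2, a + 1 ≠ 0 ↔ ¬a ≠ 0 := by decide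
  simp only [hammingNorm, Pi.add_apply, Pi.one_apply, flip,
    Finset.card_filter_add_card_filter_not, Finset.card_univ]

theorem IsGrayMap.hammingNorm_mul_le {G : Type*} [Group G] {n : ℕ} {φ : G → (Fin n → ZMod 2)}
    (hφ : IsGrayMap φ) (a b : G) :
    hammingNorm (φ (a * b)) ≤ hammingNorm (φ a) + hammingNorm (φ b) := by
  simpa using hφ.2.2.1 (a * b) b 1

theorem Subgroup.map_mul_le_add_of_index_eq_two {G : Type*} [Group G] {H : Subgroup G}
    (hH : H.index = 2) {f : G → ℕ} {n : ℕ} (hmul : ∀ a ∈ H, ∀ b ∈ H, f (a * b) ≤ f a + f b)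
    (hle : ∀ g ∈ H, f g ≤ 2 * n) (hout : ∀ g ∉ H, f g = n) (a b : G) :
    f (a * b) ≤ f a + f b := by
  have hab := mul_mem_iff_of_index_two hH (a := a) (b := b)
  by_cases ha : a ∈ H <;> by_cases hb : b ∈ H
  · exact hmul a ha b hb
  · rw [hout (a * b) (by tauto), hout b hb]; omega
  · rw [hout (a * b) (by tauto), hout a ha]; omega
  · rw [hout a ha, hout b hb]; linarith [hle (a * b) (by tauto)]

theorem stmt2_general {G : Type*} [Group G] (H : Subgroup G) (hH : H.index = 2)
    (x : G) (hx : x ∉ H) {n : ℕ} (φ : H → (Fin n → ZMod 2)) (hφ : IsGrayMap φ)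
    (φhat : G → (Fin (2 * n) → ZMod 2))
    (hmem : ∀ (g : G) (hg : g ∈ H),
      φhat g = fun i => Fin.append (φ ⟨g, hg⟩) (φ ⟨g, hg⟩) (Fin.cast (two_mul n) i))
    (hnmem : ∀ (g : G), g ∉ H → ∀ (hg : x⁻¹ * g ∈ H),
      φhat g = fun i =>
        Fin.append (φ ⟨x⁻¹ * g, hg⟩) (φ ⟨x⁻¹ * g, hg⟩ + 1) (Fin.cast (two_mul n) i)) :
    ∀ a b : G, hammingNorm (φhat (a * b)) ≤ hammingNorm (φhat a) + hammingNorm (φhat b) := by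
  refine H.map_mul_le_add_of_index_eq_two hH (f := fun g => hammingNorm (φhat g)) (n := n)
    ?_ ?_ ?_
  · intro a ha b hb
    rw [hmem _ (mul_mem ha hb), hmem a ha, hmem b hb, hammingNorm_finAppend_cast,
      hammingNorm_finAppend_cast, hammingNorm_finAppend_cast]
    have hsub : hammingNorm (φ ⟨a * b, _⟩) ≤ hammingNorm (φ ⟨a, ha⟩) + hammingNorm (φ ⟨b, hb⟩) :=
      hφ.hammingNorm_mul_le ⟨a, ha⟩ ⟨b, hb⟩
    omega
  · intro g hg
    rw [hmem g hg, hammingNorm_finAppend_cast, two_mul]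
    have hle : hammingNorm (φ ⟨g, hg⟩) ≤ n := by
      simpa using hammingNorm_le_card_fintype (x := φ ⟨g, hg⟩)
    omega
  · intro g hg
    have hxg : x⁻¹ * g ∈ H :=
      (H.mul_mem_iff_of_index_two hH).2 (iff_of_false (inv_mem_iff.not.2 hx) hg)
    rw [hnmem g hg hxg, hammingNorm_finAppend_cast, hammingNorm_add_hammingNorm_add_one,
      Fintype.card_fin]

/-- Lemma 3: for the Type 1 map `φ̂`,
`w_H(φ̂ (a*b)) ≤ w_H(φ̂ a) + w_H(φ̂ b)` for all `a b`. -/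
theorem stmt2 {G : Type*} [Group G] [Finite G] (H : Subgroup G) (hH : H.index = 2)
    (x : G) (hx : x ∉ H) {n : ℕ} (φ : H → (Fin n → ZMod 2)) (hφ : IsGrayMap φ)
    (φhat : G → (Fin (2 * n) → ZMod 2))
    (hmem : ∀ (g : G) (hg : g ∈ H),
      φhat g = fun i => Fin.append (φ ⟨g, hg⟩) (φ ⟨g, hg⟩) (Fin.cast (two_mul n) i))
    (hnmem : ∀ (g : G), g ∉ H → ∀ (hg : x⁻¹ * g ∈ H),
      φhat g = fun i =>
        Fin.append (φ ⟨x⁻¹ * g, hg⟩) (φ ⟨x⁻¹ * g, hg⟩ + 1) (Fin.cast (two_mul n) i)) :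
    ∀ a b : G, hammingNorm (φhat (a * b)) ≤ hammingNorm (φhat a) + hammingNorm (φhat b) :=
  stmt2_general H hH x hx φ hφ φhat hmem hnmem
end

section
/- Let D₈ be the dihedral group of order 8 (DihedralGroup 4 in Mathlib, with rotations r i and reflections sr i for i ∈ ZMod 4). The map θ : D₈ → (Fin 3 → ZMod 2) defined by θ(r i) = (0 | φ₁(i)) and θ(sr i) = (1 | φ₁(i)), where ( · | · ) denotes concatenation, is a Gray map on D₈. -/
/-- The standard Gray map on `C₄ = ZMod 4`. -/
def phi1 (i : ZMod 4) : Fin 2 → ZMod 2 :=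
  if i = 0 then ![0, 0] else if i = 1 then ![0, 1] else if i = 2 then ![1, 1] else ![1, 0]

/-- The map `θ` on the dihedral group `D₈` with `θ(r i) = (0 | φ₁ i)` and
`θ(sr i) = (1 | φ₁ i)`. -/
def theta9 : DihedralGroup 4 → (Fin 3 → ZMod 2)
  | .r i => Matrix.vecCons 0 (phi1 i)
  | .sr i => Matrix.vecCons 1 (phi1 i)

/-!
If `φ (a * b⁻¹)` always has Hamming weight `d_H (φ a, φ b)` and `φ` is injective, then `d_φ` is the
Hamming metric pulled back along `φ`, hence a metric. For `θ` this identity splits coordinatewise: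
the first bit of `θ (a * b⁻¹)` records whether exactly one of `a`, `b` is a reflection, and on the
remaining two bits it reduces to `w_H (φ₁ (i - j)) = d_H (φ₁ i, φ₁ j)`, the isometry property of
the Gray map on `ZMod 4`.
-/

open DihedralGroup Matrix

theorem IsGrayMap.of_injective {G : Type*} [Group G] {n : ℕ} {φ : G → (Fin n → ZMod 2)}
    (hφ : Function.Injective φ)
    (h : ∀ a b, hammingNorm (φ (a * b⁻¹)) = hammingDist (φ a) (φ b)) : IsGrayMap φ := by
  refine ⟨fun a b => ?_, fun a b => ?_, fun a b c => ?_, h⟩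
  · rw [h, hammingDist_eq_zero, hφ.eq_iff]
  · rw [h, h, hammingDist_comm]
  · simpa only [h] using hammingDist_triangle (φ a) (φ b) (φ c)

theorem hammingDist_vecCons {α : Type*} [DecidableEq α] {n : ℕ} (x y : α) (v w : Fin n → α) :
    hammingDist (vecCons x v) (vecCons y w) = (if x = y then 0 else 1) + hammingDist v w := by
  simp only [hammingDist, Finset.card_filter, Fin.sum_univ_succ, cons_val_zero, cons_val_succ]
  split_ifs <;> simp_all

theorem hammingNorm_vecCons {α : Type*} [Zero α] [DecidableEq α] {n : ℕ} (x : α) (v : Fin n → α) :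
    hammingNorm (vecCons x v) = (if x = 0 then 0 else 1) + hammingNorm v := by
  rw [← hammingDist_zero_right, ← hammingDist_zero_right, ← cons_zero_zero, hammingDist_vecCons]

theorem phi1_injective : Function.Injective phi1 := by
  decide

theorem hammingNorm_phi1_sub (i j : ZMod 4) :
    hammingNorm (phi1 (i - j)) = hammingDist (phi1 i) (phi1 j) := by
  revert i j; decide

theorem theta9_injective : Function.Injective theta9 := by
  rintro (i | i) (j | j) h <;>
    simp_all [theta9, vecCons_inj, phi1_injective.eq_iff]

theorem hammingNorm_theta9_mul_inv (a b : DihedralGroup 4) :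
    hammingNorm (theta9 (a * b⁻¹)) = hammingDist (theta9 a) (theta9 b) := by
  cases a <;> cases b <;>
    simp [theta9, inv_r, inv_sr, r_mul_r, r_mul_sr, sr_mul_r, sr_mul_sr, hammingNorm_vecCons,
      hammingDist_vecCons, ← sub_eq_add_neg, hammingNorm_phi1_sub, hammingDist_comm]

/-- Example 4.1: `θ` is a Gray map on `D₈ = DihedralGroup 4`. -/
theorem stmt9 : IsGrayMap theta9 :=
  .of_injective theta9_injective hammingNorm_theta9_mul_inv
end

section
/- The map φ₂ : ZMod 4 × ZMod 2 → (Fin 3 → ZMod 2) defined by φ₂(i, j) = (j | φ₁(i)), where ( · | · ) denotes concatenation, is a Gray map on the group K₈ = ZMod 4 × ZMod 2. -/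
/-!
Hamming weight and Hamming distance are additive under concatenation of words, so concatenating
Gray maps on `G` and `H` gives a Gray map on `G × H`. Up to swapping the factors, `φ₂` is the
concatenation of the one-bit identity Gray map on `ZMod 2` with `φ₁`, and `φ₁` is a Gray map by
a finite check.
-/

/-- A map `φ : G → (Fin n → ZMod 2)` on an additive group is a Gray map if
`d_φ(a,b) = w_H(φ (a - b))` is a metric on `G` and `d_φ(a,b) = d_H(φ a, φ b)`. -/
def IsAddGrayMap {G : Type*} [AddGroup G] {n : ℕ} (φ : G → (Fin n → ZMod 2)) : Prop :=
  (∀ a b : G, hammingNorm (φ (a - b)) = 0 ↔ a = b) ∧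
  (∀ a b : G, hammingNorm (φ (a - b)) = hammingNorm (φ (b - a))) ∧
  (∀ a b c : G, hammingNorm (φ (a - c)) ≤
      hammingNorm (φ (a - b)) + hammingNorm (φ (b - c))) ∧
  (∀ a b : G, hammingNorm (φ (a - b)) = hammingDist (φ a) (φ b))

/-- The map `φ₂ : ZMod 4 × ZMod 2 → (Fin 3 → ZMod 2)`, `φ₂(i, j) = (j | φ₁ i)`. -/
def phi2 (p : ZMod 4 × ZMod 2) : Fin 3 → ZMod 2 :=
  Matrix.vecCons p.2 (phi1 p.1)


section Hamming

variable {β : Type*} [DecidableEq β] {m n : ℕ}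

theorem hammingNorm_append [Zero β] (u : Fin m → β) (v : Fin n → β) :
    hammingNorm (Fin.append u v) = hammingNorm u + hammingNorm v := by
  simp only [hammingNorm, Finset.card_filter, Fin.sum_univ_add, Fin.append_left, Fin.append_right]

theorem hammingDist_append (u u' : Fin m → β) (v v' : Fin n → β) :
    hammingDist (Fin.append u v) (Fin.append u' v') = hammingDist u u' + hammingDist v v' := by
  simp only [hammingDist, Finset.card_filter, Fin.sum_univ_add, Fin.append_left, Fin.append_right]

theorem hammingNorm_sub_eq_hammingDist {ι : Type*} [Fintype ι] [AddCommGroup β]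
    (x y : ι → β) : hammingNorm (x - y) = hammingDist x y := by
  rw [hammingDist_comm, hammingDist_eq_hammingNorm, neg_add_eq_sub]

end Hamming

namespace IsAddGrayMap

theorem id (n : ℕ) : IsAddGrayMap (id : (Fin n → ZMod 2) → (Fin n → ZMod 2)) := by
  refine ⟨fun a b => ?_, fun a b => ?_, fun a b c => ?_, fun a b => ?_⟩ <;>
    simp only [_root_.id, hammingNorm_sub_eq_hammingDist]
  · exact hammingDist_eq_zero
  · exact hammingDist_comm a b
  · exact hammingDist_triangle a b c

variable {G H K : Type*} [AddGroup G] [AddGroup H] [AddGroup K] {m n : ℕ}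

theorem comp_addEquiv {φ : G → (Fin n → ZMod 2)} (hφ : IsAddGrayMap φ) (e : K ≃+ G) :
    IsAddGrayMap (φ ∘ e) := by
  obtain ⟨hzero, hsymm, htri, hdist⟩ := hφ
  refine ⟨fun a b => ?_, fun a b => ?_, fun a b c => ?_, fun a b => ?_⟩ <;>
    simp only [Function.comp_apply, map_sub]
  · rw [hzero, e.apply_eq_iff_eq]
  · exact hsymm _ _
  · exact htri _ _ _
  · exact hdist _ _

theorem prod_append {φ : G → (Fin m → ZMod 2)} {ψ : H → (Fin n → ZMod 2)}
    (hφ : IsAddGrayMap φ) (hψ : IsAddGrayMap ψ) :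
    IsAddGrayMap fun p : G × H => Fin.append (φ p.1) (ψ p.2) := by
  obtain ⟨hφzero, hφsymm, hφtri, hφdist⟩ := hφ
  obtain ⟨hψzero, hψsymm, hψtri, hψdist⟩ := hψ
  refine ⟨fun a b => ?_, fun a b => ?_, fun a b c => ?_, fun a b => ?_⟩ <;>
    simp only [Prod.fst_sub, Prod.snd_sub, hammingNorm_append, hammingDist_append]
  · rw [Nat.add_eq_zero_iff, hφzero, hψzero, Prod.ext_iff]
  · rw [hφsymm, hψsymm]
  · exact (add_le_add (hφtri _ _ _) (hψtri _ _ _)).trans_eq (add_add_add_comm ..)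
  · rw [hφdist, hψdist]

end IsAddGrayMap

theorem isAddGrayMap_phi1 : IsAddGrayMap phi1 := by
  unfold IsAddGrayMap
  decide

/-- Example 4.2: `φ₂` is a Gray map on `K₈ = ZMod 4 × ZMod 2`. -/
theorem stmt10 : IsAddGrayMap phi2 := by
  have hbit : IsAddGrayMap fun j : ZMod 2 => fun _ : Fin 1 => j :=
    (IsAddGrayMap.id 1).comp_addEquiv (AddEquiv.funUnique (Fin 1) (ZMod 2)).symm
  have hphi2 : phi2 = (fun q : ZMod 2 × ZMod 4 => Fin.append (fun _ : Fin 1 => q.1) (phi1 q.2)) ∘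
      AddEquiv.prodComm := by
    funext p i
    fin_cases i <;> rfl
  rw [hphi2]
  exact (hbit.prod_append isAddGrayMap_phi1).comp_addEquiv _
end

section
/- Let ψ₆ : ZMod 2 → Aut(ZMod 4 × ZMod 2) be the homomorphism sending the generator of ZMod 2 to the automorphism (s, t) ↦ (3s + 2t, t) (where 2t means the image of t under the map ZMod 2 → ZMod 4 sending 1 to 2), and let G₁₀ = (ZMod 4 × ZMod 2) ⋊_{ψ₆} ZMod 2 be the corresponding semidirect product (a group of order 16). Define θ : G₁₀ → (Fin 4 → ZMod 2) on the element with (ZMod 4 × ZMod 2)-component (s, t) and ZMod 2-component l by θ = (l | φ₂(s, t)), where ( · | · ) denotes concatenation. Then there exists g ∈ G₁₀ with w_H(θ(g)) ≠ w_H(θ(g⁻¹)); in particular, θ is not a Gray map on G₁₀. -/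
/-- The automorphism `(s, t) ↦ (3s + 2t, t)` of `ZMod 4 × ZMod 2`, where `2t` denotes
the image of `t` under the map `ZMod 2 → ZMod 4` sending `1` to `2`. -/
def tau6 : (ZMod 4 × ZMod 2) ≃+ (ZMod 4 × ZMod 2) where
  toFun p := (3 * p.1 + 2 * (p.2.val : ZMod 4), p.2)
  invFun p := (3 * p.1 + 2 * (p.2.val : ZMod 4), p.2)
  left_inv := by decide
  right_inv := by decide
  map_add' := by decide

/-- `τ₆` as a multiplicative automorphism of `Multiplicative (ZMod 4 × ZMod 2)`. -/
def tau6Aut : MulAut (Multiplicative (ZMod 4 × ZMod 2)) :=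
  AddEquiv.toMultiplicative tau6

/-- The homomorphism `ψ₆ : C₂ → Aut(ZMod 4 × ZMod 2)` sending the generator to
`(s, t) ↦ (3s + 2t, t)`. -/
def psi6 : Multiplicative (ZMod 2) →* MulAut (Multiplicative (ZMod 4 × ZMod 2)) :=
  MonoidHom.mk' (fun l => tau6Aut ^ (Multiplicative.toAdd l).val) (by
    intro a b
    have h2 : tau6Aut ^ 2 = 1 := by ext x <;> revert x <;> decide
    show tau6Aut ^ (Multiplicative.toAdd (a * b)).val = _
    rw [toAdd_mul, ZMod.val_add, ← pow_eq_pow_mod _ h2, pow_add])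

/-- `G₁₀ = (ZMod 4 × ZMod 2) ⋊[ψ₆] ZMod 2`, a group of order 16. -/
abbrev G10 := Multiplicative (ZMod 4 × ZMod 2) ⋊[psi6] Multiplicative (ZMod 2)

/-- The map `θ(g) = (l | φ₂(s, t))`, where `g ∈ G₁₀` has `(ZMod 4 × ZMod 2)`-component
`(s, t)` and `ZMod 2`-component `l`. -/
def theta10 (g : G10) : Fin 4 → ZMod 2 :=
  Matrix.vecCons (Multiplicative.toAdd g.right) (phi2 (Multiplicative.toAdd g.left))

/-! Symmetry of `d_φ` at `b = 1` forces `w_H(φ g) = w_H(φ g⁻¹)` for any Gray map. In `G₁₀` the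
twist `τ₆` sends `g = ((0, 1), 1)` to `g⁻¹ = ((2, 1), 1)`, so `θ g = (1,1,0,0)` has weight 2 while
`θ g⁻¹ = (1,1,1,1)` has weight 4. -/

theorem IsGrayMap.hammingNorm_inv {G : Type*} [Group G] {n : ℕ} {φ : G → (Fin n → ZMod 2)}
    (hφ : IsGrayMap φ) (g : G) : hammingNorm (φ g) = hammingNorm (φ g⁻¹) := by
  simpa using hφ.2.1 g 1

def g10Witness : G10 :=
  ⟨Multiplicative.ofAdd ((0 : ZMod 4), (1 : ZMod 2)), Multiplicative.ofAdd 1⟩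

theorem g10Witness_inv :
    g10Witness⁻¹ = ⟨Multiplicative.ofAdd ((2 : ZMod 4), (1 : ZMod 2)), Multiplicative.ofAdd 1⟩ := by
  decide

theorem hammingNorm_theta10_g10Witness : hammingNorm (theta10 g10Witness) = 2 := by
  decide

theorem hammingNorm_theta10_g10Witness_inv : hammingNorm (theta10 g10Witness⁻¹) = 4 := by
  rw [g10Witness_inv]
  decide

/-- there is an element `g` of `G₁₀` with
`w_H(θ g) ≠ w_H(θ g⁻¹)`; in particular `θ` is not a Gray map on `G₁₀`. -/
theorem stmt19 :
    (∃ g : G10, hammingNorm (theta10 g) ≠ hammingNorm (theta10 g⁻¹)) ∧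
    ¬ IsGrayMap theta10 := by
  have hne : hammingNorm (theta10 g10Witness) ≠ hammingNorm (theta10 g10Witness⁻¹) := by
    rw [hammingNorm_theta10_g10Witness, hammingNorm_theta10_g10Witness_inv]
    decide
  exact ⟨⟨g10Witness, hne⟩, fun hθ => hne (hθ.hammingNorm_inv g10Witness)⟩
end
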